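/- Let f, g : ℝ² → ℍ be integrable, and suppose g is the partial derivative of f with respect to the first variable s in the L¹ norm, i.e. lim_{h→0} ∫_{ℝ²} |(f(s+h,t) − f(s,t))/h − g(s,t)| ds dt = 0. Then the two-sided quaternion Fourier transforms satisfy 𝓖_T(u,v) = i u 𝓕_T(u,v) for all (u,v) ∈ ℝ². -/

import Mathlib

/-!
Translating `f` by `h` in the first variable multiplies its two-sided transform on the left by
`e^{iuh}`: the left kernel `e^{-ius}` is a character in `s` and stands to the left of `f`, so the
non-commutativity of `ℍ` does not interfere. Hence the transform of the difference quotient is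
`h⁻¹ (e^{iuh} - 1) 𝓕_T(u,v)`, which tends to `iu 𝓕_T(u,v)`. Since both kernels have modulus one,
`|𝓕_T φ (u,v)| ≤ ‖φ‖₁`, so the same quantity also tends to `𝓖_T(u,v)`.
-/

open MeasureTheory Filter Real Set
open scoped Quaternion Topology

noncomputable section

def qi : ℍ[ℝ] := ⟨0,1,0,0⟩
def qj : ℍ[ℝ] := ⟨0,0,1,0⟩

/-- `e^{μθ} = cos θ + μ sin θ` for a (pure unit) quaternion `μ`. -/
def qexp (μ : ℍ[ℝ]) (θ : ℝ) : ℍ[ℝ] := (Real.cos θ : ℍ[ℝ]) + Real.sin θ • μ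

/-- Two-sided quaternion Fourier transform. -/
def QFT_T (f : ℝ × ℝ → ℍ[ℝ]) (u v : ℝ) : ℍ[ℝ] :=
  ∫ p : ℝ × ℝ, qexp qi (-(u * p.1)) * f p * qexp qj (-(v * p.2))


/-- `g` is the partial derivative of `f` with respect to the first variable in the `L¹` norm. -/
def L1PartialDerivS (f g : ℝ × ℝ → ℍ[ℝ]) : Prop :=
  Tendsto (fun h : ℝ => ∫ p : ℝ × ℝ, ‖h⁻¹ • (f (p.1 + h, p.2) - f p) - g p‖)
    (𝓝[≠] (0:ℝ)) (𝓝 0)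

section qexp

variable {μ : ℍ[ℝ]}

lemma qexp_zero (μ : ℍ[ℝ]) : qexp μ 0 = 1 := by simp [qexp]

lemma qexp_eq_smul (μ : ℍ[ℝ]) (θ : ℝ) : qexp μ θ = cos θ • (1 : ℍ[ℝ]) + sin θ • μ := by
  rw [qexp, ← Quaternion.coe_mul_eq_smul (cos θ), mul_one]

lemma qexp_add (hμ : μ * μ = -1) (a b : ℝ) : qexp μ (a + b) = qexp μ a * qexp μ b := by
  simp only [qexp_eq_smul, cos_add, sin_add, add_mul, mul_add, smul_mul_smul_comm, one_mul,
    mul_one, hμ]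
  module

lemma norm_qexp (hre : μ.re = 0) (hnorm : ‖μ‖ = 1) (θ : ℝ) : ‖qexp μ θ‖ = 1 := by
  have hsq : Quaternion.normSq μ = 1 := by rw [Quaternion.normSq_eq_norm_mul_self, hnorm, one_mul]
  rw [Quaternion.normSq_def'] at hsq
  rw [norm_eq_sqrt_real_inner, Quaternion.inner_self, sqrt_eq_one, Quaternion.normSq_def']
  simp only [qexp, hre, Quaternion.re_add, Quaternion.imI_add, Quaternion.imJ_add,
    Quaternion.imK_add, Quaternion.re_coe, Quaternion.imI_coe, Quaternion.imJ_coe,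
    Quaternion.imK_coe, Quaternion.re_smul, Quaternion.imI_smul, Quaternion.imJ_smul,
    Quaternion.imK_smul, smul_eq_mul]
  linear_combination sin θ ^ 2 * hsq + sin_sq_add_cos_sq θ - sin θ ^ 2 * μ.re * hre

lemma hasDerivAt_qexp (μ : ℍ[ℝ]) (θ : ℝ) :
    HasDerivAt (qexp μ) ((-sin θ : ℝ) + cos θ • μ) θ := by
  rw [show qexp μ = fun y => cos y • (1 : ℍ[ℝ]) + sin y • μ from funext (qexp_eq_smul μ),
    ← mul_one ((-sin θ : ℝ) : ℍ[ℝ]), Quaternion.coe_mul_eq_smul]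
  exact ((hasDerivAt_cos θ).smul_const 1).add ((hasDerivAt_sin θ).smul_const μ)

lemma tendsto_slope_qexp_mul (μ : ℍ[ℝ]) (u : ℝ) :
    Tendsto (fun h : ℝ => h⁻¹ • (qexp μ (u * h) - 1)) (𝓝[≠] 0) (𝓝 (u • μ)) := by
  have hd : HasDerivAt (fun h => qexp μ (u * h)) (u • μ) 0 := by
    have := (hasDerivAt_qexp μ (u * 0)).scomp (0 : ℝ) ((hasDerivAt_id (0 : ℝ)).const_mul u)
    simp only [mul_zero, sin_zero, cos_zero, neg_zero, Quaternion.coe_zero, zero_add, one_smul,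
      mul_one] at this
    exact this
  simpa [slope_fun_def, qexp_zero] using hd.tendsto_slope_zero

lemma continuous_qexp (μ : ℍ[ℝ]) : Continuous (qexp μ) :=
  continuous_iff_continuousAt.2 fun θ => (hasDerivAt_qexp μ θ).continuousAt

end qexp

lemma qi_mul_qi : qi * qi = -1 := by
  ext <;> simp [Quaternion.re_mul, Quaternion.imI_mul, Quaternion.imJ_mul, Quaternion.imK_mul] <;>
    simp [qi]

lemma norm_qi : ‖qi‖ = 1 := by
  rw [norm_eq_sqrt_real_inner, Quaternion.inner_self, Quaternion.normSq_def']
  simp [qi]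

lemma norm_qj : ‖qj‖ = 1 := by
  rw [norm_eq_sqrt_real_inner, Quaternion.inner_self, Quaternion.normSq_def']
  simp [qj]

lemma Prod.add_mk_zero {α β : Type*} [Add α] [AddZeroClass β] (x : α × β) (a : α) :
    x + (a, 0) = (x.1 + a, x.2) :=
  Prod.ext rfl (add_zero _)

lemma integrable_comp_add_fst {f : ℝ × ℝ → ℍ[ℝ]} (hf : Integrable f) (h : ℝ) :
    Integrable (fun p : ℝ × ℝ => f (p.1 + h, p.2)) := by
  simpa only [Prod.add_mk_zero] using hf.comp_add_right (h, 0)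

section QFT

variable {f g : ℝ × ℝ → ℍ[ℝ]}

lemma norm_qft_integrand (f : ℝ × ℝ → ℍ[ℝ]) (u v : ℝ) (p : ℝ × ℝ) :
    ‖qexp qi (-(u * p.1)) * f p * qexp qj (-(v * p.2))‖ = ‖f p‖ := by
  rw [norm_mul, norm_mul, norm_qexp rfl norm_qi, norm_qexp rfl norm_qj, one_mul, mul_one]

lemma integrable_qft_integrand (hf : Integrable f) (u v : ℝ) :
    Integrable (fun p : ℝ × ℝ => qexp qi (-(u * p.1)) * f p * qexp qj (-(v * p.2))) := by
  refine hf.norm.mono' ?_ (Eventually.of_forall fun p => (norm_qft_integrand f u v p).le)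
  exact (((continuous_qexp qi).comp (by fun_prop)).aestronglyMeasurable.mul hf.1).mul
    ((continuous_qexp qj).comp (by fun_prop)).aestronglyMeasurable

lemma norm_QFT_T_le (f : ℝ × ℝ → ℍ[ℝ]) (u v : ℝ) : ‖QFT_T f u v‖ ≤ ∫ p, ‖f p‖ :=
  (norm_integral_le_integral_norm _).trans_eq
    (integral_congr_ae (Eventually.of_forall (norm_qft_integrand f u v)))

lemma QFT_T_sub (hf : Integrable f) (hg : Integrable g) (u v : ℝ) :
    QFT_T (fun p => f p - g p) u v = QFT_T f u v - QFT_T g u v := by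
  rw [QFT_T, QFT_T, QFT_T,
    ← integral_sub (integrable_qft_integrand hf u v) (integrable_qft_integrand hg u v)]
  simp_rw [mul_sub, sub_mul]

lemma QFT_T_smul (c : ℝ) (f : ℝ × ℝ → ℍ[ℝ]) (u v : ℝ) :
    QFT_T (fun p => c • f p) u v = c • QFT_T f u v := by
  rw [QFT_T, QFT_T, ← integral_smul]
  simp_rw [mul_smul_comm, smul_mul_assoc]

lemma QFT_T_comp_add_fst (f : ℝ × ℝ → ℍ[ℝ]) (h u v : ℝ) :
    QFT_T (fun p => f (p.1 + h, p.2)) u v = qexp qi (u * h) * QFT_T f u v := by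
  have hshift : QFT_T (fun p => f (p.1 + h, p.2)) u v =
      ∫ p : ℝ × ℝ, qexp qi (-(u * (p.1 - h))) * f p * qexp qj (-(v * p.2)) := by
    rw [QFT_T, ← integral_add_right_eq_self (fun p : ℝ × ℝ =>
      qexp qi (-(u * (p.1 - h))) * f p * qexp qj (-(v * p.2))) ((h, 0) : ℝ × ℝ)]
    simp [Prod.add_mk_zero]
  rw [hshift, QFT_T, ← smul_eq_mul, ← integral_smul]
  congr 1
  funext p
  rw [smul_eq_mul, ← mul_assoc, ← mul_assoc, ← qexp_add qi_mul_qi,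
    show u * h + -(u * p.1) = -(u * (p.1 - h)) by ring]

lemma QFT_T_diffQuot_fst (hf : Integrable f) (h u v : ℝ) :
    QFT_T (fun p => h⁻¹ • (f (p.1 + h, p.2) - f p)) u v =
      (h⁻¹ • (qexp qi (u * h) - 1)) * QFT_T f u v := by
  rw [QFT_T_smul, QFT_T_sub (integrable_comp_add_fst hf h) hf, QFT_T_comp_add_fst,
    smul_mul_assoc, sub_mul, one_mul]

lemma tendsto_QFT_T_of_tendsto_integral_norm_sub {ι : Type*} {l : Filter ι}
    {F : ι → ℝ × ℝ → ℍ[ℝ]} (hF : ∀ i, Integrable (F i)) (hg : Integrable g)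
    (hlim : Tendsto (fun i => ∫ p, ‖F i p - g p‖) l (𝓝 0)) (u v : ℝ) :
    Tendsto (fun i => QFT_T (F i) u v) l (𝓝 (QFT_T g u v)) := by
  rw [tendsto_iff_norm_sub_tendsto_zero]
  refine squeeze_zero (fun _ => norm_nonneg _) (fun i => ?_) hlim
  rw [← QFT_T_sub (hF i) hg]
  exact norm_QFT_T_le _ u v

end QFT

/-- The two-sided QFT turns `L¹`-norm differentiation in `s` into left multiplication by `iu`. -/
theorem qft_two_sided_deriv_s
    (f g : ℝ × ℝ → ℍ[ℝ]) (hf : Integrable f) (hg : Integrable g)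
    (hderiv : L1PartialDerivS f g) :
    ∀ u v : ℝ, QFT_T g u v = (u • qi) * QFT_T f u v := by
  intro u v
  have hquot : Tendsto (fun h => QFT_T (fun p => h⁻¹ • (f (p.1 + h, p.2) - f p)) u v)
      (𝓝[≠] 0) (𝓝 (QFT_T g u v)) := tendsto_QFT_T_of_tendsto_integral_norm_sub
    (fun h => ((integrable_comp_add_fst hf h).sub hf).smul h⁻¹) hg hderiv u v
  simp_rw [QFT_T_diffQuot_fst hf] at hquot
  exact tendsto_nhds_unique hquot ((tendsto_slope_qexp_mul qi u).mul_const _)
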